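/- arXiv:2010.12656 — 4 statements merged into one kernel-verified Lean document; each statement's English description precedes it below -/
import Mathlib

section
/- In any proper 5-coloring c of the graph G₁₆, vertices 1 and 16 receive the same color: c(1) = c(16). -/
def edges1 : List (ℕ × ℕ) := [(1,2),(1,3),(2,4),(2,5),(3,4),(3,6),(4,7),(4,8),(5,6),(5,8),(5,9),(6,7),(6,10),(7,9),(7,12),(7,13),(8,10),(8,11),(8,13),(9,11),(10,12),(11,12),(11,14),(12,15),(13,14),(13,15),(14,16),(15,16)]

def edgesD : List (ℕ × ℕ) := [(1,5),(1,6),(2,3),(2,6),(2,7),(2,9),(3,5),(3,8),(3,10),(4,9),(4,10),(4,11),(4,12),(5,13),(6,13),(7,10),(7,14),(8,9),(8,15),(9,13),(9,14),(10,13),(10,15),(11,15),(11,16),(12,14),(12,16),(14,15)]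

def G16 : SimpleGraph (Fin 16) :=
  SimpleGraph.fromRel (fun a b => ((a : ℕ) + 1, (b : ℕ) + 1) ∈ edges1 ++ edgesD)

/-- For each vertex `i`, the list of neighbours `j < i`. -/
def prevAdj : List (List (Fin 16)) :=
  [[], [0], [0, 1], [1, 2], [0, 1, 2], [0, 1, 2, 4], [1, 3, 5], [2, 3, 4],
   [1, 3, 4, 6, 7], [2, 3, 5, 6, 7], [3, 7, 8], [3, 6, 9, 10],
   [4, 5, 6, 7, 8, 9], [6, 8, 10, 11, 12], [7, 9, 10, 11, 12, 13],
   [10, 11, 13, 14]]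

instance : DecidableRel G16.Adj := fun a b =>
  decidable_of_iff (a ≠ b ∧ (((a:ℕ)+1,(b:ℕ)+1) ∈ edges1 ++ edgesD ∨ ((b:ℕ)+1,(a:ℕ)+1) ∈ edges1 ++ edgesD))
    (by rw [G16, SimpleGraph.fromRel_adj])

lemma prevAdj_spec : ∀ i : Fin 16, ∀ j ∈ (prevAdj.getD i.val []), j.val < i.val ∧ G16.Adj j i := by
  decide

/-- can colour `c` extend the partial colouring `l` (next vertex `l.length`)? -/
def step (l : List (Fin 5)) (x : Fin 5) : Bool :=
  ((prevAdj.getD l.length []).all fun j => l.getD j.val 0 != x)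

def f : ℕ → List (Fin 5) → Bool
  | 0, l => l.getD 0 0 == l.getD 15 0
  | n+1, l => (List.finRange 5).all fun x => !(step l x) || f n (l ++ [x])

lemma key (c : Fin 16 → Fin 5) (hc : ∀ u v, G16.Adj u v → c u ≠ c v) :
    ∀ n (l : List (Fin 5)), l.length + n = 16 →
      (∀ i : Fin 16, i.val < l.length → l.getD i.val 0 = c i) →
      f n l = true → c 0 = c 15 := by
  intro n
  induction n with
  | zero =>
    intro l hlen hpre hf
    have h0 := hpre 0 (by omega)
    have h15 := hpre 15 (by omega)
    simp only [f, beq_iff_eq] at hf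
    rw [← h0, ← h15]
    exact hf
  | succ n ih =>
    intro l hlen hpre hf
    have hi : l.length < 16 := by omega
    set i : Fin 16 := ⟨l.length, hi⟩ with hidef
    have hstep : step l (c i) = true := by
      simp only [step, List.all_eq_true, bne_iff_ne, ne_eq]
      intro j hj
      have hspec := prevAdj_spec i j hj
      rw [hpre j (by exact hspec.1)]
      exact hc j i hspec.2
    simp only [f, List.all_eq_true] at hf
    have := hf (c i) (List.mem_finRange _)
    rw [hstep] at this
    simp only [Bool.not_true, Bool.false_or] at this
    refine ih (l ++ [c i]) (by simp; omega) ?_ this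
    intro j hj
    simp only [List.length_append, List.length_singleton] at hj
    rcases lt_or_eq_of_le (Nat.lt_succ_iff.mp hj) with h | h
    · rw [List.getD_append _ _ _ _ h]
      exact hpre j h
    · have : j = i := by rw [hidef]; exact Fin.ext h
      subst this
      rw [List.getD_eq_getElem _ _ (by simp [h])]
      simp [h]

set_option maxHeartbeats 1000000 in
/-- In any proper 5-coloring of `G₁₆`, vertices 1 and 16 (here `0` and `15` in `Fin 16`)
receive the same color. -/
theorem G16_one_eq_sixteen (c : Fin 16 → Fin 5)
    (hc : ∀ u v, G16.Adj u v → c u ≠ c v) :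
    c 0 = c 15 := by
  have a01 : G16.Adj 0 1 := by decide
  have a02 : G16.Adj 0 2 := by decide
  have a12 : G16.Adj 1 2 := by decide
  set s1 : Equiv.Perm (Fin 5) := Equiv.swap (c 0) 0 with hs1
  set s2 : Equiv.Perm (Fin 5) := Equiv.swap (s1 (c 1)) 1 with hs2
  set s3 : Equiv.Perm (Fin 5) := Equiv.swap (s2 (s1 (c 2))) 2 with hs3
  set π : Equiv.Perm (Fin 5) := (s1.trans s2).trans s3 with hπ
  set e : Fin 16 → Fin 5 := fun v => π (c v) with he
  have he0 : e 0 = 0 := by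
    have h1 : s1 (c 0) = 0 := Equiv.swap_apply_left _ _
    have hne1 : (0 : Fin 5) ≠ s1 (c 1) := by
      rw [← h1]; intro h; exact hc 0 1 a01 (s1.injective h)
    have h2 : s2 0 = 0 := Equiv.swap_apply_of_ne_of_ne hne1 (by decide)
    have hne2 : (0 : Fin 5) ≠ s2 (s1 (c 2)) := by
      rw [← h2, ← h1]; intro h
      exact hc 0 2 a02 (s1.injective (s2.injective h))
    simp only [he, hπ, Equiv.trans_apply, h1, h2]
    exact Equiv.swap_apply_of_ne_of_ne hne2 (by decide)
  have he1 : e 1 = 1 := by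
    have h2 : s2 (s1 (c 1)) = 1 := Equiv.swap_apply_left _ _
    have hne : (1 : Fin 5) ≠ s2 (s1 (c 2)) := by
      rw [← h2]; intro h
      exact hc 1 2 a12 (s1.injective (s2.injective h))
    simp only [he, hπ, Equiv.trans_apply, h2]
    exact Equiv.swap_apply_of_ne_of_ne hne (by decide)
  have he2 : e 2 = 2 := by
    simp only [he, hπ, Equiv.trans_apply]
    exact Equiv.swap_apply_left _ _
  have hce : ∀ u v, G16.Adj u v → e u ≠ e v := by
    intro u v h heq
    exact hc u v h (π.injective heq)
  have hmain : e 0 = e 15 := by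
    refine key e hce 13 [0, 1, 2] rfl ?_ (by decide)
    intro i hi
    have : i = 0 ∨ i = 1 ∨ i = 2 := by simp only [List.length_cons, List.length_nil] at hi; omega
    rcases this with h | h | h <;> subst h
    · exact he0.symm
    · exact he1.symm
    · exact he2.symm
  have : π (c 0) = π (c 15) := hmain
  exact π.injective this
end

section
/- The graph G₁₆ has chromatic number exactly 5. -/
instance inst_s8 : DecidableRel G16.Adj := fun a b => by
  unfold G16; rw [SimpleGraph.fromRel_adj]; infer_instance

def col : Fin 16 → Fin 5 := ![0, 1, 2, 0, 3, 4, 2, 1, 4, 3, 2, 1, 0, 3, 4, 0]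

lemma col_valid : ∀ a b : Fin 16, G16.Adj a b → col a ≠ col b := by decide

lemma clique5 : G16.IsClique ({0, 1, 2, 4, 5} : Finset (Fin 16)) := by
  rw [SimpleGraph.isClique_iff, Set.Pairwise]
  intro a ha b hb hab
  simp only [Finset.coe_insert, Set.mem_insert_iff, Finset.coe_singleton,
    Set.mem_singleton_iff] at ha hb
  rcases ha with rfl|rfl|rfl|rfl|rfl <;> rcases hb with rfl|rfl|rfl|rfl|rfl <;>
    first | exact absurd rfl hab | decide

/-- The chromatic number of `G₁₆` is exactly 5. -/
theorem G16_chromaticNumber : G16.chromaticNumber = 5 := by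
  apply le_antisymm
  · exact (SimpleGraph.Coloring.mk col (fun h => col_valid _ _ h)).colorable.chromaticNumber_le
  · have h := clique5.card_le_chromaticNumber
    simpa using h
end

section
/- If every proper k-coloring of a graph G forces two designated vertices a, b to have equal colors, and there is a graph H made of two copies of G sharing the vertex a, with an additional edge between the two copies of b, then H has no proper k-coloring. -/
/-- If in every proper `k`-coloring of `G` the vertices `a` and `b` get the same color,
and `H` consists of two copies of `G` sharing the vertex `a` together with an extra edge
joining the two copies of `b`, then `H` has no proper `k`-coloring. -/
theorem no_coloring_of_glued {V W : Type*} (G : SimpleGraph V) (a b : V) (k : ℕ)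
    (hab : ∀ c : V → Fin k, (∀ u v, G.Adj u v → c u ≠ c v) → c a = c b)
    (H : SimpleGraph W) (f : Bool → V → W)
    (hshare : f false a = f true a)
    (hadj : ∀ x y, H.Adj x y ↔
      (∃ s u v, G.Adj u v ∧ x = f s u ∧ y = f s v) ∨
      (x = f false b ∧ y = f true b) ∨ (x = f true b ∧ y = f false b)) :
    ¬ ∃ c : W → Fin k, ∀ u v, H.Adj u v → c u ≠ c v := by
  rintro ⟨c, hc⟩
  have hs : ∀ s : Bool, c (f s a) = c (f s b) := by
    intro s
    exact hab (fun v => c (f s v)) (fun u v huv =>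
      hc _ _ ((hadj _ _).2 (Or.inl ⟨s, u, v, huv, rfl, rfl⟩)))
  have hedge : H.Adj (f false b) (f true b) :=
    (hadj _ _).2 (Or.inr (Or.inl ⟨rfl, rfl⟩))
  exact hc _ _ hedge (by rw [← hs false, ← hs true, hshare])
end

section
/- The Minkowski sum of five copies of the 5-point set G₅ = {(R sin(2πk/5), R cos(2πk/5)) : k = 0,…,4}, with R = sqrt((5+√5)/10), consists of exactly 126 distinct points of ℝ². -/
open Pointwise

/-- `R = √((5+√5)/10)`. -/
noncomputable def R : ℝ := Real.sqrt ((5 + Real.sqrt 5) / 10)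

/-- The regular pentagon `G₅` as a subset of the plane. -/
noncomputable def G5 : Set (EuclideanSpace ℝ (Fin 2)) :=
  {p | ∃ k : ℕ, k < 5 ∧
    p = ![R * Real.sin (2 * Real.pi * k / 5), R * Real.cos (2 * Real.pi * k / 5)]}

/-!
Reading the plane as `ℂ`, `G₅` is `R` times the fifth roots of unity `ζᵏ`. A sum of five points
of `G₅` is `∑ mₖ ζᵏ`, where `mₖ` counts how often the vertex `ζᵏ` is chosen. Two multisets
with the same sum give an integer relation `∑ wₖ ζᵏ = 0` with `∑ wₖ = 0`; since the minimal
polynomial of `ζ` is `1 + X + X² + X³ + X⁴`, such a relation is trivial. Hence the sums are in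
bijection with the multisets of size five from five vertices, of which there are `C(9, 5) = 126`.
-/

open Complex Polynomial

theorem nsmul_range_eq_range_sum_sym {ι M : Type*} [AddCommMonoid M] (g : ι → M) (n : ℕ) :
    n • Set.range g = Set.range fun s : Sym ι n => ((s : Multiset ι).map g).sum := by
  induction n with
  | zero => rw [zero_nsmul, Set.range_unique]; rfl
  | succ n ih =>
    ext x
    simp only [succ_nsmul, ih, Set.mem_add, Set.mem_range]
    constructor
    · rintro ⟨_, ⟨s, rfl⟩, _, ⟨i, rfl⟩, rfl⟩
      exact ⟨i ::ₛ s, by simp [Sym.coe_cons, add_comm]⟩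
    · rintro ⟨s, rfl⟩
      obtain ⟨i, s, rfl⟩ := s.exists_eq_cons_of_succ
      exact ⟨_, ⟨s, rfl⟩, _, ⟨i, rfl⟩, by simp [Sym.coe_cons, add_comm]⟩

theorem AffineIndependent.injective_sum_sym {ι M : Type*} [Fintype ι] [DecidableEq ι]
    [AddCommGroup M] {g : ι → M} (hg : AffineIndependent ℤ g) (n : ℕ) :
    Function.Injective fun s : Sym ι n => ((s : Multiset ι).map g).sum := by
  have sum_map_eq (s : Multiset ι) : (s.map g).sum = ∑ i, (s.count i : ℤ) • g i := by
    simp only [Finset.sum_multiset_map_count, natCast_zsmul]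
    exact Finset.sum_subset (Finset.subset_univ _) fun i _ hi => by simp_all
  intro s t hst
  have hcount := hg.eq_of_sum_eq_sum (s := Finset.univ)
    (w₁ := fun i => ((s : Multiset ι).count i : ℤ)) (w₂ := fun i => ((t : Multiset ι).count i : ℤ))
    (by simp only [← Nat.cast_sum, Multiset.sum_count_eq_card, Finset.mem_univ, implies_true,
      Sym.card_coe])
    (by rwa [← sum_map_eq, ← sum_map_eq])
  exact Sym.ext (Multiset.ext.mpr fun i => by exact_mod_cast hcount i (Finset.mem_univ i))

theorem Polynomial.eq_zero_of_aeval_primitiveRoot_of_eval_one {K : Type*} [Field K] [CharZero K]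
    {p : ℕ} (hp : p.Prime) {ζ : K} (hζ : IsPrimitiveRoot ζ p) {q : ℚ[X]} (hdeg : q.degree < p)
    (h1 : q.eval 1 = 0) (hζq : aeval ζ q = 0) : q = 0 := by
  have hΦp : cyclotomic p ℚ ∣ q := cyclotomic_eq_minpoly_rat hζ hp.pos ▸ minpoly.dvd ℚ ζ hζq
  have hΦ1 : cyclotomic 1 ℚ ∣ q := by simpa using dvd_iff_isRoot.mpr h1
  refine eq_zero_of_dvd_of_degree_lt ((cyclotomic.isCoprime_rat hp.one_lt.ne').mul_dvd hΦp hΦ1) ?_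
  rw [degree_mul, degree_cyclotomic, degree_cyclotomic, Nat.totient_prime hp, Nat.totient_one]
  rwa [← Nat.cast_add, Nat.sub_add_cancel hp.one_le]

theorem IsPrimitiveRoot.affineIndependent_pow {K : Type*} [Field K] [CharZero K] {p : ℕ}
    (hp : p.Prime) {ζ : K} (hζ : IsPrimitiveRoot ζ p) :
    AffineIndependent ℤ fun k : Fin p => ζ ^ (k : ℕ) := by
  rw [affineIndependent_iff]
  intro s w hw hwζ
  set q : ℚ[X] := ∑ k ∈ s, monomial k (w k : ℚ)
  have hq : q = 0 := by
    refine eq_zero_of_aeval_primitiveRoot_of_eval_one hp hζ ?_ ?_ ?_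
    · exact mem_degreeLT.mp (Submodule.sum_mem _ fun k _ => monomial_coe_mem_degreeLT k _)
    · simpa [q, eval_finsetSum] using congrArg (Int.cast : ℤ → ℚ) hw
    · simpa [q, aeval_monomial, zsmul_eq_mul] using hwζ
  intro k hk
  have hcoeff := congrArg (coeff · k) hq
  simp only [q, finsetSum_coeff, coeff_monomial, Fin.val_inj] at hcoeff
  simpa [hk] using hcoeff

lemma R_ne_zero : R ≠ 0 :=
  (Real.sqrt_pos.mpr (by positivity)).ne'

/-- `G5` lists `(sin θ, cos θ)`, so the imaginary part goes to the first coordinate. -/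
noncomputable def complexToPlane : ℂ →+ EuclideanSpace ℝ (Fin 2) where
  toFun z := !₂[R * z.im, R * z.re]
  map_zero' := by ext i; fin_cases i <;> simp
  map_add' z w := by ext i; fin_cases i <;> simp [mul_add]

lemma complexToPlane_injective : Function.Injective complexToPlane := by
  intro z w h
  have him : R * z.im = R * w.im := congrArg (· 0) h
  have hre : R * z.re = R * w.re := congrArg (· 1) h
  exact Complex.ext (mul_left_cancel₀ R_ne_zero hre) (mul_left_cancel₀ R_ne_zero him)

lemma G5_eq_range :
    G5 = Set.range fun k : Fin 5 => complexToPlane (exp (2 * Real.pi * I / 5) ^ (k : ℕ)) := by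
  have hpow (k : ℕ) : exp (2 * Real.pi * I / 5) ^ k = exp ((2 * Real.pi * k / 5 : ℝ) * I) := by
    rw [← Complex.exp_nat_mul]; push_cast; ring_nf
  ext p
  simp only [G5, Set.mem_ofPred_eq, Set.mem_range, hpow, complexToPlane, AddMonoidHom.coe_mk,
    ZeroHom.coe_mk, exp_ofReal_mul_I_re, exp_ofReal_mul_I_im, Fin.exists_iff, exists_prop]
  refine exists_congr fun k => and_congr_right fun _ => ?_
  rw [eq_comm, ← WithLp.toLp_ofLp 2 p, (WithLp.toLp_injective 2).eq_iff]

lemma G5_vertices_affineIndependent :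
    AffineIndependent ℤ fun k : Fin 5 => complexToPlane (exp (2 * Real.pi * I / 5) ^ (k : ℕ)) :=
  ((isPrimitiveRoot_exp 5 (by norm_num)).affineIndependent_pow Nat.prime_five).map'
    complexToPlane.toIntLinearMap.toAffineMap complexToPlane_injective

/-- The Minkowski sum of five copies of `G₅` has exactly 126 points. -/
theorem minkowski_sum_card : (G5 + G5 + G5 + G5 + G5).ncard = 126 := by
  have hsum : G5 + G5 + G5 + G5 + G5 = 5 • G5 := by abel
  rw [hsum, G5_eq_range, nsmul_range_eq_range_sum_sym,
    Set.ncard_range_of_injective (G5_vertices_affineIndependent.injective_sum_sym 5),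
    Nat.card_eq_fintype_card, Sym.card_sym_eq_choose]
  rfl
end
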